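/- arXiv:1805.07781 — 2 statements merged into one kernel-verified Lean document; each statement's English description precedes it below -/
import Mathlib

section
/- More generally, for r ≥ 3: let M be an (r-1)-uniform hypergraph on [n] and define the r-uniform hypergraph G by declaring an r-set e an edge iff the number of (r-1)-subsets of e that are edges of M is even. Then for every (r+1)-element vertex set R, the number of edges of G contained in R is congruent to r+1 modulo 2. -/
open Finset


lemma cast_parity (m : ℕ) : (if Even m then (0:ZMod 2) else 1) = (m : ZMod 2) := by
  rw [← ZMod.natCast_mod m 2]
  rcases Nat.even_or_odd m with h | h
  · rw [if_pos h, Nat.even_iff.mp h]; simp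
  · rw [if_neg (Nat.not_even_iff_odd.mpr h), Nat.odd_iff.mp h]; simp

lemma count_supersets {n : ℕ} (R f : Finset (Fin n)) (r : ℕ) (hr : 1 ≤ r)
    (hR : R.card = r + 1) (hf : f ⊆ R) (hfc : f.card = r - 1) :
    ((R.powersetCard r).filter (fun e => f ⊆ e)).card = 2 := by
  have hRf : (R \ f).card = 2 := by
    rw [card_sdiff_of_subset hf, hR, hfc]; omega
  have h2 : ((R \ f).powersetCard 1).card = 2 := by
    rw [card_powersetCard, hRf]; decide
  rw [← h2]
  apply Finset.card_bij (fun e _ => R \ e)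
  · intro e he
    simp only [mem_filter, mem_powersetCard] at he
    obtain ⟨⟨heR, hec⟩, hfe⟩ := he
    rw [mem_powersetCard]
    refine ⟨sdiff_subset_sdiff (Subset.refl R) hfe, ?_⟩
    rw [card_sdiff_of_subset heR, hR, hec]; omega
  · intro e1 h1 e2 h2 heq
    simp only [mem_filter, mem_powersetCard] at h1 h2
    rw [← Finset.sdiff_sdiff_eq_self h1.1.1, ← Finset.sdiff_sdiff_eq_self h2.1.1, heq]
  · intro g hg
    rw [mem_powersetCard] at hg
    obtain ⟨hgRf, hgc⟩ := hg
    have hgR : g ⊆ R := hgRf.trans sdiff_subset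
    refine ⟨R \ g, ?_, ?_⟩
    · simp only [mem_filter, mem_powersetCard]
      refine ⟨⟨sdiff_subset, ?_⟩, ?_⟩
      · rw [card_sdiff_of_subset hgR, hR, hgc]
        omega
      · rw [subset_sdiff]
        exact ⟨hf, (sdiff_disjoint.mono_left hgRf).symm⟩
    · rw [Finset.sdiff_sdiff_eq_self hgR]

/-- For `r ≥ 3`, the parity `r`-graph `G` built from an `(r-1)`-uniform hypergraph `M` on
`[n]` (an `r`-set is an edge iff it contains an even number of `(r-1)`-edges of `M`)
satisfies: every `(r+1)`-element vertex set `R` spans a number of edges `≡ r+1 (mod 2)`. -/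
theorem stmt4 (r n : ℕ) (hr : 3 ≤ r) (M : Finset (Finset (Fin n)))
    (hM : ∀ e ∈ M, e.card = r - 1)
    (R : Finset (Fin n)) (hR : R.card = r + 1) :
    ((R.powersetCard r).filter
      (fun e => Even (((e.powersetCard (r - 1)).filter (· ∈ M)).card))).card
    ≡ r + 1 [MOD 2] := by
  set c : Finset (Fin n) → ℕ :=
    fun e => ((e.powersetCard (r - 1)).filter (· ∈ M)).card with hc
  set S := R.powersetCard r with hS
  rw [← ZMod.natCast_eq_natCast_iff]
  -- split into even and odd parts
  have hsplit : (S.filter (fun e => Even (c e))).card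
      + (S.filter (fun e => ¬ Even (c e))).card = S.card :=
    Finset.card_filter_add_card_filter_not _
  have hScard : S.card = r + 1 := by
    rw [hS, card_powersetCard, hR, Nat.choose_succ_self_right]
  -- the odd part has even cardinality
  have hodd : (((S.filter (fun e => ¬ Even (c e))).card : ℕ) : ZMod 2) = 0 := by
    have h1 : (((S.filter (fun e => ¬ Even (c e))).card : ℕ) : ZMod 2)
        = ∑ e ∈ S, (c e : ZMod 2) := by
      rw [Finset.card_filter]
      push_cast
      refine Finset.sum_congr rfl fun e _ => ?_
      rw [← cast_parity (c e)]
      by_cases h : Even (c e) <;> simp [h]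
    rw [h1]
    -- rewrite c e as a count over subsets of R
    have h2 : ∀ e ∈ S, c e = (((R.powersetCard (r-1)).filter (· ∈ M)).filter
        (fun f => f ⊆ e)).card := by
      intro e he
      rw [hS, mem_powersetCard] at he
      rw [hc]
      apply congrArg Finset.card
      ext f
      simp only [mem_filter, mem_powersetCard]
      constructor
      · rintro ⟨⟨hfe, hfc⟩, hfM⟩
        exact ⟨⟨⟨hfe.trans he.1, hfc⟩, hfM⟩, hfe⟩
      · rintro ⟨⟨⟨_, hfc⟩, hfM⟩, hfe⟩
        exact ⟨⟨hfe, hfc⟩, hfM⟩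
    rw [Finset.sum_congr rfl (fun e he => by rw [h2 e he])]
    have h3 : ∑ e ∈ S, (((((R.powersetCard (r-1)).filter (· ∈ M)).filter
        (fun f => f ⊆ e)).card : ℕ) : ZMod 2)
        = ∑ f ∈ (R.powersetCard (r-1)).filter (· ∈ M),
            (((S.filter (fun e => f ⊆ e)).card : ℕ) : ZMod 2) := by
      simp_rw [Finset.card_filter]
      push_cast
      rw [Finset.sum_comm]
    rw [h3]
    apply Finset.sum_eq_zero
    intro f hf
    rw [mem_filter, mem_powersetCard] at hf
    rw [hS, count_supersets R f r (by omega) hR hf.1.1 hf.1.2]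
    decide
  have : (((S.filter (fun e => Even (c e))).card : ℕ) : ZMod 2)
      = ((S.card : ℕ) : ZMod 2) := by
    rw [← hsplit]; push_cast; rw [hodd]; ring
  rw [this, hScard]
end

section
/- For r ≥ 3, let F be any r-uniform hypergraph with a number of edges congruent to r modulo 2. Then for any (r-1)-uniform hypergraph M on [n], the parity r-graph G built from M contains no induced copy of F. -/
open Finset

/-- Counting lemma: the number of `r`-subsets of an `(r+1)`-set `S` containing a fixed
`(r-1)`-subset `T` is `2`. -/
lemma aux_count {α : Type*} [DecidableEq α] (r : ℕ) (hr : 1 ≤ r) (S T : Finset α)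
    (hS : S.card = r + 1) (hT : T ⊆ S) (hTc : T.card = r - 1) :
    ((S.powersetCard r).filter (fun A => T ⊆ A)).card = 2 := by
  have hset : (S.powersetCard r).filter (fun A => T ⊆ A) =
      (S \ T).image (fun x => insert x T) := by
    ext A
    simp only [mem_filter, mem_powersetCard, mem_image, mem_sdiff]
    constructor
    · rintro ⟨⟨hAS, hAc⟩, hTA⟩
      have hdiff : (A \ T).card = 1 := by
        rw [card_sdiff_of_subset hTA, hAc, hTc]; omega
      obtain ⟨x, hx⟩ := Finset.card_eq_one.1 hdiff
      have hxA : x ∈ A \ T := hx ▸ Finset.mem_singleton_self x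
      rw [Finset.mem_sdiff] at hxA
      refine ⟨x, ⟨hAS hxA.1, hxA.2⟩, ?_⟩
      apply Finset.Subset.antisymm
      · exact Finset.insert_subset hxA.1 hTA
      · intro y hy
        by_cases hyT : y ∈ T
        · exact Finset.mem_insert_of_mem hyT
        · have : y ∈ A \ T := Finset.mem_sdiff.2 ⟨hy, hyT⟩
          rw [hx, Finset.mem_singleton] at this
          exact this ▸ Finset.mem_insert_self x T
    · rintro ⟨x, ⟨hxS, hxT⟩, rfl⟩
      refine ⟨⟨Finset.insert_subset hxS hT, ?_⟩, Finset.subset_insert x T⟩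
      rw [Finset.card_insert_of_notMem hxT, hTc]; omega
  rw [hset, Finset.card_image_of_injOn, Finset.card_sdiff_of_subset hT, hS, hTc]
  · omega
  · intro x hx y hy hxy
    rw [Finset.mem_coe, Finset.mem_sdiff] at hx hy
    have hxy' : insert x T = insert y T := hxy
    have : x ∈ insert y T := hxy' ▸ Finset.mem_insert_self x T
    rcases Finset.mem_insert.1 this with h | h
    · exact h
    · exact absurd h hx.2

/-- For `r ≥ 3`, if `F` is an `r`-uniform hypergraph on `r+1` vertices with a number of
edges congruent to `r (mod 2)`, then the parity `r`-graph built from any `(r-1)`-uniform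
hypergraph `M` on `[n]` contains no induced copy of `F`. -/
theorem stmt6 (r n : ℕ) (hr : 3 ≤ r)
    (M : Finset (Finset (Fin n))) (hM : ∀ e ∈ M, e.card = r - 1)
    (EF : Finset (Finset (Fin (r + 1)))) (hEF : ∀ e ∈ EF, e.card = r)
    (hpar : EF.card ≡ r [MOD 2]) :
    ¬ ∃ φ : Fin (r + 1) → Fin n, Function.Injective φ ∧
      ∀ e : Finset (Fin (r + 1)), e.card = r →
        (Even ((((e.image φ).powersetCard (r - 1)).filter (· ∈ M)).card) ↔ e ∈ EF) := by
  rintro ⟨φ, hφ, hind⟩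
  classical
  set ψ : Fin (r + 1) ↪ Fin n := ⟨φ, hφ⟩ with hψ
  set S : Finset (Fin n) := Finset.univ.map ψ with hSdef
  have hScard : S.card = r + 1 := by
    rw [hSdef, Finset.card_map, Finset.card_univ, Fintype.card_fin]
  set g : Finset (Fin n) → ℕ := fun A => ((A.powersetCard (r - 1)).filter (· ∈ M)).card
    with hg
  set E : Finset (Finset (Fin (r + 1))) := Finset.univ.powersetCard r with hE
  -- Step A: the sum over all r-subsets of S is even
  have hA : ∑ A ∈ S.powersetCard r, (g A : ZMod 2) = 0 := by
    have h1 : ∀ A, (g A : ZMod 2) =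
        ∑ T ∈ (A.powersetCard (r - 1)).filter (· ∈ M), (1 : ZMod 2) := by
      intro A
      rw [Finset.sum_const, nsmul_eq_mul, mul_one]
    calc ∑ A ∈ S.powersetCard r, (g A : ZMod 2)
        = ∑ A ∈ S.powersetCard r, ∑ T ∈ (A.powersetCard (r - 1)).filter (· ∈ M),
            (1 : ZMod 2) := by
          exact Finset.sum_congr rfl fun A _ => h1 A
      _ = ∑ T ∈ (S.powersetCard (r - 1)).filter (· ∈ M),
            ∑ A ∈ (S.powersetCard r).filter (fun A => T ⊆ A), (1 : ZMod 2) := by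
          apply Finset.sum_comm'
          intro A T
          simp only [mem_filter, mem_powersetCard]
          constructor
          · rintro ⟨⟨hAS, hAc⟩, ⟨hTA, hTc⟩, hTM⟩
            exact ⟨⟨⟨hAS, hAc⟩, hTA⟩, ⟨hTA.trans hAS, hTc⟩, hTM⟩
          · rintro ⟨⟨⟨hAS, hAc⟩, hTA⟩, ⟨hTS, hTc⟩, hTM⟩
            exact ⟨⟨hAS, hAc⟩, ⟨hTA, hTc⟩, hTM⟩
      _ = 0 := by
          apply Finset.sum_eq_zero
          intro T hT
          rw [Finset.mem_filter, Finset.mem_powersetCard] at hT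
          rw [Finset.sum_const, aux_count r (by omega) S T hScard hT.1.1 hT.1.2]
          decide
  -- Step B: reindex the sum over r-subsets of S by r-subsets of Fin (r+1)
  have hB : ∑ e ∈ E, (g (e.image φ) : ZMod 2) = ∑ A ∈ S.powersetCard r, (g A : ZMod 2) := by
    rw [hSdef, Finset.powersetCard_map, Finset.sum_map]
    apply Finset.sum_congr rfl
    intro e _
    congr 1
    simp only [RelEmbedding.coe_toEmbedding, Finset.mapEmbedding_apply, Finset.map_eq_image]
    rfl
  -- Step C: evaluate each summand using the induced-copy hypothesis
  have hC : ∑ e ∈ E, (g (e.image φ) : ZMod 2) =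
      ((E.filter (fun e => e ∉ EF)).card : ZMod 2) := by
    have h2 : ∀ e ∈ E, (g (e.image φ) : ZMod 2) = if e ∉ EF then 1 else 0 := by
      intro e he
      rw [hE, Finset.mem_powersetCard] at he
      have hiff := hind e he.2
      by_cases heEF : e ∈ EF
      · simp only [heEF, not_true, if_neg, ite_eq_right_iff]
        have : Even (g (e.image φ)) := hiff.2 heEF
        rw [(ZMod.natCast_eq_zero_iff _ _).2 this.two_dvd]
        simp
      · have hodd : ¬ Even (g (e.image φ)) := fun h => heEF (hiff.1 h)
        rw [Nat.not_even_iff] at hodd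
        simp only [heEF, not_false_iff, if_pos]
        rw [← ZMod.natCast_mod, hodd, Nat.cast_one]
    rw [Finset.sum_congr rfl h2, Finset.sum_ite, Finset.sum_const_zero, add_zero,
      Finset.sum_const, nsmul_eq_mul, mul_one]
  -- Put things together
  have hzero : ((E.filter (fun e => e ∉ EF)).card : ZMod 2) = 0 := by
    rw [← hC, hB, hA]
  have hdvd : 2 ∣ (E.filter (fun e => e ∉ EF)).card :=
    (ZMod.natCast_eq_zero_iff _ _).1 hzero
  have hEFsub : EF ⊆ E := by
    intro e he
    rw [hE, Finset.mem_powersetCard]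
    exact ⟨Finset.subset_univ e, hEF e he⟩
  have hsplit : (E.filter (fun e => e ∉ EF)).card + EF.card = E.card := by
    have h := Finset.card_filter_add_card_filter_not (s := E)
      (p := fun e => e ∈ EF)
    rw [Finset.filter_mem_eq_inter, Finset.inter_eq_right.2 hEFsub] at h
    omega
  have hEcard : E.card = r + 1 := by
    rw [hE, Finset.card_powersetCard, Finset.card_univ, Fintype.card_fin,
      Nat.choose_succ_self_right]
  have hpar' : EF.card % 2 = r % 2 := hpar
  omega
end
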